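/- The function z ↦ −log Φ(z) is convex on ℝ; equivalently, the negative Hessian of the probit log-likelihood, φ(z)²/Φ(z)² + zφ(z)/Φ(z), is strictly positive for all real z. -/

import Mathlib

/-
Write `λ = φ/Φ` for the inverse Mills ratio. Since `Φ' = φ` and `φ' = -zφ`, the second
derivative of `-log Φ` is `λ(λ + z)`, so everything reduces to `φ(z) + zΦ(z) > 0`.
Integrating `tφ(t) = -φ'(t)` gives `φ(z) + zΦ(z) = ∫_{-∞}^z (z - t) φ(t) dt`, whose integrand
is positive on `(-∞, z)`.
-/

open Real

/-- The standard normal density. -/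
noncomputable def stdNormalPDF (z : ℝ) : ℝ :=
  Real.exp (-z ^ 2 / 2) / Real.sqrt (2 * Real.pi)

/-- The standard normal cumulative distribution function. -/
noncomputable def stdNormalCDF (z : ℝ) : ℝ :=
  ∫ t in Set.Iic z, stdNormalPDF t

open Set Filter MeasureTheory

theorem setIntegral_Iio_pos {f : ℝ → ℝ} {z : ℝ} (hf : IntegrableOn f (Iio z))
    (hpos : ∀ t < z, 0 < f t) : 0 < ∫ t in Iio z, f t := by
  rw [setIntegral_pos_iff_support_of_nonneg_ae
    ((ae_restrict_iff' measurableSet_Iio).2 (Eventually.of_forall fun t ht => (hpos t ht).le)) hf]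
  have hsupp : Function.support f ∩ Iio z = Iio z :=
    inter_eq_right.2 fun t ht => (hpos t ht).ne'
  simp [hsupp]

theorem stdNormalPDF_pos (z : ℝ) : 0 < stdNormalPDF z := by
  unfold stdNormalPDF; positivity

theorem continuous_stdNormalPDF : Continuous stdNormalPDF := by
  unfold stdNormalPDF; fun_prop

theorem integrable_stdNormalPDF : Integrable stdNormalPDF := by
  convert (integrable_exp_neg_mul_sq (by norm_num : (0 : ℝ) < 1 / 2)).div_const
    (√(2 * π)) using 2 with t
  rw [stdNormalPDF]; ring_nf

theorem integrable_id_mul_stdNormalPDF : Integrable fun t => t * stdNormalPDF t := by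
  convert (integrable_mul_exp_neg_mul_sq (by norm_num : (0 : ℝ) < 1 / 2)).div_const
    (√(2 * π)) using 2 with t
  rw [stdNormalPDF]; ring_nf

theorem hasDerivAt_stdNormalPDF (z : ℝ) : HasDerivAt stdNormalPDF (-z * stdNormalPDF z) z := by
  have hexponent : HasDerivAt (fun t : ℝ => -t ^ 2 / 2) (-z) z :=
    ((hasDerivAt_pow 2 z).neg.div_const 2).congr_deriv (by ring)
  exact (hexponent.exp.div_const (√(2 * π))).congr_deriv (by rw [stdNormalPDF]; ring)

theorem tendsto_stdNormalPDF_atBot : Tendsto stdNormalPDF atBot (nhds 0) :=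
  tendsto_zero_of_hasDerivAt_of_integrableOn_Iic (a := 0) (fun z _ => hasDerivAt_stdNormalPDF z)
    (by simpa only [neg_mul, Pi.neg_def] using integrable_id_mul_stdNormalPDF.neg.integrableOn)
    integrable_stdNormalPDF.integrableOn

theorem integral_Iic_id_mul_stdNormalPDF (z : ℝ) :
    ∫ t in Iic z, t * stdNormalPDF t = -stdNormalPDF z := by
  have h := integral_Iic_of_hasDerivAt_of_tendsto' (f := fun t => -stdNormalPDF t) (a := z) (m := 0)
    (fun t _ => by simpa only [neg_mul, neg_neg, Pi.neg_def] using (hasDerivAt_stdNormalPDF t).neg)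
    integrable_id_mul_stdNormalPDF.integrableOn (by simpa using tendsto_stdNormalPDF_atBot.neg)
  simpa using h

theorem stdNormalCDF_pos (z : ℝ) : 0 < stdNormalCDF z := by
  rw [stdNormalCDF, integral_Iic_eq_integral_Iio]
  exact setIntegral_Iio_pos integrable_stdNormalPDF.integrableOn fun t _ => stdNormalPDF_pos t

theorem hasDerivAt_stdNormalCDF (z : ℝ) : HasDerivAt stdNormalCDF (stdNormalPDF z) z := by
  have h : stdNormalCDF = fun u => stdNormalCDF 0 + ∫ t in (0 : ℝ)..u, stdNormalPDF t := by
    ext u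
    rw [← intervalIntegral.integral_Iic_sub_Iic integrable_stdNormalPDF.integrableOn
      integrable_stdNormalPDF.integrableOn,
      stdNormalCDF, stdNormalCDF]
    ring
  rw [h]
  exact (intervalIntegral.integral_hasDerivAt_right integrable_stdNormalPDF.intervalIntegrable
    (continuous_stdNormalPDF.stronglyMeasurableAtFilter _ _)
    continuous_stdNormalPDF.continuousAt).const_add _

theorem stdNormalPDF_add_mul_stdNormalCDF (z : ℝ) :
    stdNormalPDF z + z * stdNormalCDF z = ∫ t in Iic z, (z - t) * stdNormalPDF t := by
  simp only [sub_mul]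
  rw [integral_sub (integrable_stdNormalPDF.const_mul z).integrableOn
      integrable_id_mul_stdNormalPDF.integrableOn,
    integral_const_mul, integral_Iic_id_mul_stdNormalPDF, stdNormalCDF]
  ring

theorem stdNormalPDF_add_mul_stdNormalCDF_pos (z : ℝ) :
    0 < stdNormalPDF z + z * stdNormalCDF z := by
  rw [stdNormalPDF_add_mul_stdNormalCDF, integral_Iic_eq_integral_Iio]
  refine setIntegral_Iio_pos ?_ fun t ht => mul_pos (sub_pos.2 ht) (stdNormalPDF_pos t)
  simpa only [sub_mul, Pi.sub_def] using
    ((integrable_stdNormalPDF.const_mul z).sub integrable_id_mul_stdNormalPDF).integrableOn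

noncomputable def invMillsRatio (z : ℝ) : ℝ := stdNormalPDF z / stdNormalCDF z

theorem invMillsRatio_pos (z : ℝ) : 0 < invMillsRatio z :=
  div_pos (stdNormalPDF_pos z) (stdNormalCDF_pos z)

theorem invMillsRatio_add_pos (z : ℝ) : 0 < invMillsRatio z + z := by
  have hΦ := stdNormalCDF_pos z
  have h : invMillsRatio z + z = (stdNormalPDF z + z * stdNormalCDF z) / stdNormalCDF z := by
    rw [invMillsRatio]; field_simp
  rw [h]
  exact div_pos (stdNormalPDF_add_mul_stdNormalCDF_pos z) hΦ

theorem hasDerivAt_neg_log_stdNormalCDF (z : ℝ) :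
    HasDerivAt (fun u => -log (stdNormalCDF u)) (-invMillsRatio z) z :=
  ((hasDerivAt_stdNormalCDF z).log (stdNormalCDF_pos z).ne').neg

theorem hasDerivAt_neg_invMillsRatio (z : ℝ) :
    HasDerivAt (fun u => -invMillsRatio u) (invMillsRatio z * (invMillsRatio z + z)) z := by
  have hΦ := (stdNormalCDF_pos z).ne'
  refine ((hasDerivAt_stdNormalPDF z).div (hasDerivAt_stdNormalCDF z) hΦ).neg.congr_deriv ?_
  rw [invMillsRatio]
  field_simp
  ring

/-- `z ↦ −log Φ(z)` is convex on `ℝ`; equivalently, the negative Hessian of the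
probit log-likelihood `φ(z)²/Φ(z)² + zφ(z)/Φ(z)` is strictly positive for all
real `z`. -/
theorem neg_log_probit_convex :
    ConvexOn ℝ Set.univ (fun z : ℝ => -Real.log (stdNormalCDF z)) ∧
    ∀ z : ℝ, 0 < stdNormalPDF z ^ 2 / stdNormalCDF z ^ 2
        + z * stdNormalPDF z / stdNormalCDF z := by
  have hHessian : ∀ z, invMillsRatio z * (invMillsRatio z + z)
      = stdNormalPDF z ^ 2 / stdNormalCDF z ^ 2 + z * stdNormalPDF z / stdNormalCDF z := by
    intro z; simp only [invMillsRatio]; ring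
  have hpos : ∀ z, 0 < invMillsRatio z * (invMillsRatio z + z) := fun z =>
    mul_pos (invMillsRatio_pos z) (invMillsRatio_add_pos z)
  refine ⟨?_, fun z => hHessian z ▸ hpos z⟩
  exact convexOn_of_hasDerivWithinAt2_nonneg convex_univ
    (fun z _ => (hasDerivAt_neg_log_stdNormalCDF z).continuousAt.continuousWithinAt)
    (fun z _ => (hasDerivAt_neg_log_stdNormalCDF z).hasDerivWithinAt)
    (fun z _ => (hasDerivAt_neg_invMillsRatio z).hasDerivWithinAt) fun z _ => (hpos z).le
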